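/- Let g_0 be a nonzero vector in ℝ^d, let g_1,…,g_n be nonzero vectors, and let g be the FLTrust aggregate: with c_i the cosine similarity between g_i and g_0, S = {i : c_i > 0} nonempty, φ_i = c_i/∑_{j∈S} c_j, ḡ_i = (‖g_0‖/‖g_i‖)·g_i, and g = ∑_{i∈S} φ_i ḡ_i. Then for any vector v ∈ ℝ^d, ‖g − v‖ ≤ 3‖g_0 − v‖ + 2‖v‖. -/
import Mathlib


open Finset RealInnerProductSpace

theorem fltrust_agg_dist_bound {d n : ℕ} (g0 : EuclideanSpace ℝ (Fin d))
    (g : Fin n → EuclideanSpace ℝ (Fin d))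
    (hg0 : g0 ≠ 0) (hg : ∀ i, g i ≠ 0)
    (c : Fin n → ℝ) (hc : ∀ i, c i = ⟪g i, g0⟫ / (‖g i‖ * ‖g0‖))
    (S : Finset (Fin n)) (hS : S = univ.filter fun i => 0 < c i) (hSne : S.Nonempty)
    (v : EuclideanSpace ℝ (Fin d)) :
    ‖(∑ i ∈ S, (c i / ∑ j ∈ S, c j) • ((‖g0‖ / ‖g i‖) • g i)) - v‖ ≤
      3 * ‖g0 - v‖ + 2 * ‖v‖ := by
  have hpos : ∀ i ∈ S, 0 < c i := by
    intro i hi; rw [hS] at hi; exact (mem_filter.mp hi).2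
  have hsum : 0 < ∑ j ∈ S, c j :=
    Finset.sum_pos hpos hSne
  have hnorm : ∀ i ∈ S, ‖(‖g0‖ / ‖g i‖) • g i‖ = ‖g0‖ := by
    intro i _
    rw [norm_smul, Real.norm_eq_abs, abs_of_nonneg (div_nonneg (norm_nonneg _) (norm_nonneg _)),
      div_mul_cancel₀]
    exact norm_ne_zero_iff.mpr (hg i)
  have hle : ‖∑ i ∈ S, (c i / ∑ j ∈ S, c j) • ((‖g0‖ / ‖g i‖) • g i)‖ ≤ ‖g0‖ := by
    calc ‖∑ i ∈ S, (c i / ∑ j ∈ S, c j) • ((‖g0‖ / ‖g i‖) • g i)‖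
        ≤ ∑ i ∈ S, ‖(c i / ∑ j ∈ S, c j) • ((‖g0‖ / ‖g i‖) • g i)‖ := norm_sum_le _ _
      _ = ∑ i ∈ S, (c i / ∑ j ∈ S, c j) * ‖g0‖ := by
          refine Finset.sum_congr rfl fun i hi => ?_
          rw [norm_smul, Real.norm_eq_abs,
            abs_of_nonneg (div_nonneg (hpos i hi).le hsum.le), hnorm i hi]
      _ = ‖g0‖ := by
          rw [← Finset.sum_mul, ← Finset.sum_div, div_self hsum.ne', one_mul]
  calc ‖(∑ i ∈ S, (c i / ∑ j ∈ S, c j) • ((‖g0‖ / ‖g i‖) • g i)) - v‖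
      ≤ ‖∑ i ∈ S, (c i / ∑ j ∈ S, c j) • ((‖g0‖ / ‖g i‖) • g i)‖ + ‖v‖ := norm_sub_le _ _
    _ ≤ ‖g0‖ + ‖v‖ := by linarith
    _ ≤ (‖g0 - v‖ + ‖v‖) + ‖v‖ := by
        have h := norm_sub_le_norm_sub_add_norm_sub g0 v 0
        simp only [sub_zero, norm_zero] at h
        linarith
    _ ≤ 3 * ‖g0 - v‖ + 2 * ‖v‖ := by
        have := norm_nonneg (g0 - v)
        linarith
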